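/- Let (g_k)_{k≥1} be a sequence with g_k = (g₁)^k + ε_k where ε_k ≥ 0 for all k, 0 ≤ g₁ ≤ 1, and suppose (1/(2 ln 2)) ∑_{k=1}^∞ g_k/(k(2k-1)) = C for some C. Then 1 - h₂((1-√g₁)/2) ≤ C, i.e., g₁ ≤ (1 - 2h₂⁻¹(1-C))² whenever 0 ≤ C ≤ 1. -/
import Mathlib

noncomputable def h2 (x : ℝ) : ℝ := -(x * Real.logb 2 x) - (1 - x) * Real.logb 2 (1 - x)

noncomputable def Faux (x : ℝ) : ℝ := (1 + x) * Real.log (1 + x) + (1 - x) * Real.log (1 - x)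

lemma hasSumF {x : ℝ} (h0 : 0 ≤ x) (h1 : x < 1) :
    HasSum (fun k : ℕ => x ^ (2 * (k + 1)) / (((k : ℝ) + 1) * (2 * ((k : ℝ) + 1) - 1))) (Faux x) := by
  have hx : |x| < 1 := abs_lt.2 ⟨by linarith, h1⟩
  have hx2 : |x ^ 2| < 1 := by
    rw [abs_of_nonneg (sq_nonneg x), sq]
    nlinarith
  have hA := (Real.hasSum_log_sub_log_of_abs_lt_one hx).mul_left x
  have hB := Real.hasSum_pow_div_log_of_abs_lt_one hx2
  have hS := hA.sub hB
  have hterm : (fun k : ℕ => x * (2 * (1 / (2 * (k : ℝ) + 1)) * x ^ (2 * k + 1)) -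
      (x ^ 2) ^ (k + 1) / ((k : ℝ) + 1))
      = fun k : ℕ => x ^ (2 * (k + 1)) / (((k : ℝ) + 1) * (2 * ((k : ℝ) + 1) - 1)) := by
    funext k
    have hk1 : ((k : ℝ) + 1) ≠ 0 := by positivity
    have hk2 : (2 * (k : ℝ) + 1) ≠ 0 := by positivity
    rw [← pow_mul]
    have h21 : (2 * ((k : ℝ) + 1) - 1) = 2 * (k : ℝ) + 1 := by ring
    rw [h21]
    field_simp
    ring
  have hsum : x * (Real.log (1 + x) - Real.log (1 - x)) - (-Real.log (1 - x ^ 2)) = Faux x := by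
    have h1x : (0:ℝ) < 1 - x := by linarith
    have h2x : (0:ℝ) < 1 + x := by linarith
    have he : (1 : ℝ) - x ^ 2 = (1 - x) * (1 + x) := by ring
    rw [he, Real.log_mul (ne_of_gt h1x) (ne_of_gt h2x), Faux]
    ring
  rw [hterm, hsum] at hS
  exact hS

lemma summable_aux : Summable (fun k : ℕ => 1 / (((k : ℝ) + 1) * (2 * ((k : ℝ) + 1) - 1))) := by
  have h : Summable (fun k : ℕ => 1 / ((k : ℝ) + 1) ^ 2) := by
    have := (summable_nat_add_iff (f := fun n : ℕ => 1 / (n : ℝ) ^ 2) 1).2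
      (Real.summable_one_div_nat_pow.2 one_lt_two)
    simpa using this
  refine Summable.of_nonneg_of_le (fun k => ?_) (fun k => ?_) h
  · have h21 : (2 * ((k:ℝ) + 1) - 1) = 2 * (k:ℝ) + 1 := by ring
    rw [h21]; positivity
  · have hk : (0:ℝ) ≤ (k : ℝ) := Nat.cast_nonneg k
    have h21 : (2 * ((k:ℝ) + 1) - 1) = 2 * (k:ℝ) + 1 := by ring
    rw [sq, h21]
    gcongr <;> first | positivity | linarith

lemma tsum_ge_F {x : ℝ} (h0 : 0 ≤ x) (h1 : x ≤ 1) :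
    Faux x ≤ ∑' k : ℕ, x ^ (2 * (k + 1)) / (((k : ℝ) + 1) * (2 * ((k : ℝ) + 1) - 1)) := by
  rcases lt_or_eq_of_le h1 with h1 | rfl
  · exact ((hasSumF h0 h1).tsum_eq).ge
  · simp only [one_pow]
    have hT : ∀ y : ℝ, 0 ≤ y → y < 1 →
        Faux y ≤ ∑' k : ℕ, 1 / (((k : ℝ) + 1) * (2 * ((k : ℝ) + 1) - 1)) := by
      intro y hy0 hy1
      rw [← (hasSumF hy0 hy1).tsum_eq]
      refine Summable.tsum_le_tsum (fun k => ?_) (hasSumF hy0 hy1).summable summable_aux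
      have hk : (0:ℝ) ≤ (k : ℝ) := Nat.cast_nonneg k
      have h21 : (2 * ((k:ℝ) + 1) - 1) = 2 * (k:ℝ) + 1 := by ring
      rw [h21]
      gcongr
      exact pow_le_one₀ hy0 hy1.le
    have hcont : Continuous Faux := by
      have hc1 : Continuous fun x : ℝ => (1 + x) * Real.log (1 + x) :=
        Real.continuous_mul_log.comp (by continuity)
      have hc2 : Continuous fun x : ℝ => (1 - x) * Real.log (1 - x) :=
        Real.continuous_mul_log.comp (by continuity)
      exact hc1.add hc2
    have htend : Filter.Tendsto Faux (nhdsWithin 1 (Set.Iio 1)) (nhds (Faux 1)) :=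
      (hcont.continuousAt).continuousWithinAt
    refine le_of_tendsto htend ?_
    filter_upwards [Ioo_mem_nhdsLT_of_mem (Set.mem_Ioc.2 ⟨zero_lt_one, le_refl (1:ℝ)⟩)]
      with y hy
    exact hT y hy.1.le hy.2

lemma h2_eq_binEntropy (t : ℝ) : h2 t = Real.binEntropy t / Real.log 2 := by
  rw [h2, Real.binEntropy, Real.logb, Real.logb, Real.log_inv, Real.log_inv]
  ring

lemma h2_F {x : ℝ} (h0 : 0 ≤ x) (h1 : x ≤ 1) :
    1 - h2 ((1 - x) / 2) = Faux x / (2 * Real.log 2) := by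
  have hL : Real.log 2 ≠ 0 := ne_of_gt (Real.log_pos one_lt_two)
  have e1 : ((1 - x) / 2) * Real.log ((1 - x) / 2)
      = (1 - x) / 2 * (Real.log (1 - x) - Real.log 2) := by
    rcases lt_or_eq_of_le h1 with h1 | rfl
    · rw [Real.log_div (by linarith) two_ne_zero]
    · norm_num
  have e2 : (1 - (1 - x) / 2) * Real.log (1 - (1 - x) / 2)
      = (1 + x) / 2 * (Real.log (1 + x) - Real.log 2) := by
    have he : 1 - (1 - x) / 2 = (1 + x) / 2 := by ring
    rw [he, Real.log_div (by linarith) two_ne_zero]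
  have key : 1 - h2 ((1 - x) / 2)
      = 1 + (((1 - x) / 2) * Real.log ((1 - x) / 2)
          + (1 - (1 - x) / 2) * Real.log (1 - (1 - x) / 2)) / Real.log 2 := by
    rw [h2, Real.logb, Real.logb]
    ring
  rw [key, e1, e2, Faux]
  field_simp
  ring

theorem stmt_8 (g ε : ℕ → ℝ) (C : ℝ)
    (hge : ∀ k : ℕ, 1 ≤ k → g k = (g 1) ^ k + ε k)
    (hε : ∀ k : ℕ, 1 ≤ k → 0 ≤ ε k)
    (hg10 : 0 ≤ g 1) (hg11 : g 1 ≤ 1)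
    (hsummable : Summable (fun k : ℕ => g (k + 1) / (((k : ℝ) + 1) * (2 * ((k : ℝ) + 1) - 1))))
    (hC : (1 / (2 * Real.log 2)) *
      ∑' k : ℕ, g (k + 1) / (((k : ℝ) + 1) * (2 * ((k : ℝ) + 1) - 1)) = C)
    (h2inv : ℝ → ℝ)
    (hspec : ∀ y, 0 ≤ y → y ≤ 1 →
      0 ≤ h2inv y ∧ h2inv y ≤ 1 / 2 ∧ h2 (h2inv y) = y) :
    1 - h2 ((1 - Real.sqrt (g 1)) / 2) ≤ C ∧
      (0 ≤ C → C ≤ 1 → g 1 ≤ (1 - 2 * h2inv (1 - C)) ^ 2) := by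
  set x := Real.sqrt (g 1) with hxdef
  have hx0 : 0 ≤ x := Real.sqrt_nonneg _
  have hx1 : x ≤ 1 := Real.sqrt_le_one.mpr hg11
  have hxsq : x ^ 2 = g 1 := Real.sq_sqrt hg10
  have hL : (0:ℝ) < Real.log 2 := Real.log_pos one_lt_two
  have hterm_le : ∀ k : ℕ, x ^ (2 * (k + 1)) / (((k : ℝ) + 1) * (2 * ((k : ℝ) + 1) - 1))
      ≤ g (k + 1) / (((k : ℝ) + 1) * (2 * ((k : ℝ) + 1) - 1)) := by
    intro k
    have hk : (0:ℝ) ≤ (k : ℝ) := Nat.cast_nonneg k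
    have h21 : (2 * ((k:ℝ) + 1) - 1) = 2 * (k:ℝ) + 1 := by ring
    have hnum : x ^ (2 * (k + 1)) ≤ g (k + 1) := by
      rw [pow_mul, hxsq, hge (k + 1) (Nat.le_add_left 1 k)]
      have := hε (k + 1) (Nat.le_add_left 1 k)
      linarith
    rw [h21]
    gcongr
  have hterm_nonneg : ∀ k : ℕ,
      0 ≤ x ^ (2 * (k + 1)) / (((k : ℝ) + 1) * (2 * ((k : ℝ) + 1) - 1)) := by
    intro k
    have h21 : (2 * ((k:ℝ) + 1) - 1) = 2 * (k:ℝ) + 1 := by ring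
    rw [h21]; positivity
  have hsum2 : Summable (fun k : ℕ =>
      x ^ (2 * (k + 1)) / (((k : ℝ) + 1) * (2 * ((k : ℝ) + 1) - 1))) :=
    Summable.of_nonneg_of_le hterm_nonneg hterm_le hsummable
  have hFle : Faux x ≤ ∑' k : ℕ, g (k + 1) / (((k : ℝ) + 1) * (2 * ((k : ℝ) + 1) - 1)) :=
    le_trans (tsum_ge_F hx0 hx1) (Summable.tsum_le_tsum hterm_le hsum2 hsummable)
  have part1 : 1 - h2 ((1 - x) / 2) ≤ C := by
    rw [h2_F hx0 hx1, ← hC]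
    have h2L : (0:ℝ) < 1 / (2 * Real.log 2) := by
      apply one_div_pos.mpr; linarith
    calc Faux x / (2 * Real.log 2) = 1 / (2 * Real.log 2) * Faux x := by ring
      _ ≤ _ := mul_le_mul_of_nonneg_left hFle h2L.le
  constructor
  · exact part1
  · intro hC0 hC1
    obtain ⟨ha0, ha1, hah⟩ := hspec (1 - C) (by linarith) (by linarith)
    set a := h2inv (1 - C)
    have hple : h2 a ≤ h2 ((1 - x) / 2) := by rw [hah]; linarith
    have hmem1 : a ∈ Set.Icc (0:ℝ) 2⁻¹ := ⟨ha0, by rw [show ((2:ℝ))⁻¹ = 1/2 by norm_num]; exact ha1⟩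
    have hmem2 : (1 - x) / 2 ∈ Set.Icc (0:ℝ) 2⁻¹ := by
      rw [Set.mem_Icc, show ((2:ℝ))⁻¹ = 1/2 by norm_num]
      constructor <;> linarith
    have hbe : Real.binEntropy a ≤ Real.binEntropy ((1 - x) / 2) := by
      rw [h2_eq_binEntropy, h2_eq_binEntropy, div_le_div_iff₀ hL hL] at hple
      nlinarith
    have hale : a ≤ (1 - x) / 2 := by
      by_contra hlt
      push_neg at hlt
      exact absurd (Real.binEntropy_strictMonoOn hmem2 hmem1 hlt) (by linarith)
    have hxle : x ≤ 1 - 2 * a := by linarith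
    calc g 1 = x ^ 2 := hxsq.symm
      _ ≤ (1 - 2 * a) ^ 2 := pow_le_pow_left₀ hx0 hxle 2
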